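/- arXiv:1508.07177 — 5 statements merged into one kernel-verified Lean document; each statement's English description precedes it below -/
import Mathlib

section
/- Let f be an entire function and C > 0 a constant such that M_1(f,r) ≤ C·e^r/√r for all r > 0, where M_1(f,r) = (1/2π)∫₀^{2π}|f(re^{it})|dt. Then for every m ∈ ℕ, the sequence (sup_{|z|≤m} |f^{(n)}(z)|)_{n≥1} is bounded. -/
/-!
Cauchy's estimate on the circle `|w| = R`, with the supremum of `|f|` replaced by its mean
`M₁(f, R)`, bounds the Taylor coefficients of `f` at `0`; summing the Taylor series of `f⁽ⁿ⁾`
then gives `|f⁽ⁿ⁾(z)| ≤ n! M₁(f, R) R / (R - |z|)ⁿ⁺¹` for `|z| < R`. With `R = n + m` and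
`|z| ≤ m`, the growth hypothesis and Stirling's bound `n! ≤ e √n (n / e)ⁿ` make the right-hand
side at most `C e^(m+1) √(m + 1)`, uniformly in `n`.
-/

open Filter Metric

/-- The integral 1-mean of `f` on the circle of radius `r`. -/
noncomputable def M1 (f : ℂ → ℂ) (r : ℝ) : ℝ :=
  (1 / (2 * Real.pi)) * ∫ t in (0:ℝ)..(2 * Real.pi), ‖f (r * Complex.exp (t * Complex.I))‖

/-- The sup of `‖f‖` over the closed ball of radius `m` centered at `0`. -/
noncomputable def supD (f : ℂ → ℂ) (m : ℝ) : ℝ :=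
  sSup ((fun z => ‖f z‖) '' Metric.closedBall (0:ℂ) m)

open scoped Nat
open Real

lemma factorial_le_exp_one_mul_sqrt_mul_pow {n : ℕ} (hn : n ≠ 0) :
    (n ! : ℝ) ≤ exp 1 * √n * (n / exp 1) ^ n := by
  have hseq : Stirling.stirlingSeq n ≤ exp 1 / √2 := by
    obtain ⟨k, rfl⟩ := Nat.exists_eq_succ_of_ne_zero hn
    rw [← Stirling.stirlingSeq_one]
    exact Stirling.stirlingSeq'_antitone k.zero_le
  have hpos : 0 < √(2 * n) * (n / exp 1) ^ n := by positivity
  calc (n ! : ℝ) = Stirling.stirlingSeq n * (√(2 * n) * (n / exp 1) ^ n) := by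
        rw [Stirling.stirlingSeq, div_mul_cancel₀ _ hpos.ne']
    _ ≤ exp 1 / √2 * (√(2 * n) * (n / exp 1) ^ n) := by gcongr
    _ = exp 1 * √n * (n / exp 1) ^ n := by
        rw [sqrt_mul zero_le_two]
        field_simp

lemma M1_eq_circleAverage (f : ℂ → ℂ) (R : ℝ) : M1 f R = circleAverage (‖f ·‖) 0 R := by
  simp [M1, circleAverage_def, circleMap]

lemma norm_iteratedDeriv_zero_le_M1 {f : ℂ → ℂ} {R : ℝ} (hR : 0 < R)
    (hf : DifferentiableOn ℂ f (closedBall 0 R)) (n : ℕ) :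
    ‖iteratedDeriv n f 0‖ ≤ n ! * M1 f R / R ^ n := by
  lift R to NNReal using hR.le
  have hps := hf.hasFPowerSeriesOnBall (mod_cast hR)
  rw [iteratedDeriv_eq_iteratedFDeriv, ← hps.factorial_smul 1 n, ← Nat.cast_smul_eq_nsmul ℝ,
    norm_smul, norm_natCast, mul_div_assoc]
  gcongr
  calc ‖cauchyPowerSeries f 0 R n fun _ => 1‖ ≤ ‖cauchyPowerSeries f 0 R n‖ :=
        ((cauchyPowerSeries f 0 R n).le_opNorm _).trans_eq (by simp)
    _ ≤ _ := norm_cauchyPowerSeries_le f 0 R n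
    _ = M1 f R / R ^ n := by
        rw [M1_eq_circleAverage, circleAverage_def, smul_eq_mul, NNReal.abs_eq, inv_pow,
          div_eq_mul_inv]

lemma iteratedDeriv_iteratedDeriv {𝕜 F : Type*} [NontriviallyNormedField 𝕜] [NormedAddCommGroup F]
    [NormedSpace 𝕜 F] (f : 𝕜 → F) (k n : ℕ) :
    iteratedDeriv k (iteratedDeriv n f) = iteratedDeriv (k + n) f := by
  simp only [iteratedDeriv_eq_iterate, Function.iterate_add_apply]

lemma norm_iteratedDeriv_le_of_norm_iteratedDeriv_zero_le {E : Type*} [NormedAddCommGroup E]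
    [NormedSpace ℂ E] [CompleteSpace E] {f : ℂ → E} (hf : Differentiable ℂ f)
    {A R : ℝ} (hR : 0 < R) (hA : ∀ k, ‖iteratedDeriv k f 0‖ ≤ k ! * A / R ^ k) (n : ℕ) {z : ℂ}
    (hz : ‖z‖ < R) :
    ‖iteratedDeriv n f z‖ ≤ n ! * A * R / (R - ‖z‖) ^ (n + 1) := by
  have hx : ‖‖z‖ / R‖ < 1 := by
    rwa [norm_div, norm_norm, Real.norm_of_nonneg hR.le, div_lt_one hR]
  have htaylor := Complex.hasSum_taylorSeries_of_entire
    (hf.contDiff (n := ⊤).differentiable_iteratedDeriv n (WithTop.coe_lt_top _)) 0 z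
  have hgeom := (hasSum_choose_mul_geometric_of_norm_lt_one n hx).mul_left (n ! * A / R ^ n)
  convert htaylor.norm_le_of_bounded hgeom fun k => ?_ using 1
  · have hRz : R - ‖z‖ ≠ 0 := (sub_pos.2 hz).ne'
    rw [one_sub_div hR.ne', div_pow]
    field_simp
    ring
  · rw [iteratedDeriv_iteratedDeriv, sub_zero, norm_smul, norm_smul, norm_inv,
      Complex.norm_natCast, norm_pow]
    have hfac : ((k + n)! : ℝ) = (k + n).choose n * k ! * n ! := by
      exact_mod_cast (Nat.add_choose_mul_factorial_mul_factorial k n).symm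
    calc (k ! : ℝ)⁻¹ * (‖z‖ ^ k * ‖iteratedDeriv (k + n) f 0‖)
        ≤ (k ! : ℝ)⁻¹ * (‖z‖ ^ k * ((k + n)! * A / R ^ (k + n))) := by gcongr; exact hA _
      _ = n ! * A / R ^ n * ((k + n).choose n * (‖z‖ / R) ^ k) := by
        rw [hfac, pow_add, div_pow]
        field_simp

lemma factorial_mul_exp_mul_sqrt_div_pow_le {n : ℕ} (hn : n ≠ 0) {m : ℝ} (hm : 0 ≤ m) :
    n ! * exp (n + m) * √(n + m) / n ^ (n + 1) ≤ exp (m + 1) * √(m + 1) := by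
  have hn1 : (1 : ℝ) ≤ n := mod_cast Nat.one_le_iff_ne_zero.2 hn
  have hn' : (0 : ℝ) < n := by positivity
  have hratio : (n + m) / n ≤ m + 1 := by
    rw [div_le_iff₀ hn']
    nlinarith
  calc n ! * exp (n + m) * √(n + m) / n ^ (n + 1)
      ≤ exp 1 * √n * (n / exp 1) ^ n * exp (n + m) * √(n + m) / n ^ (n + 1) := by
        gcongr; exact factorial_le_exp_one_mul_sqrt_mul_pow hn
    _ = exp (m + 1) * √((n + m) / n) := by
        rw [sqrt_div' _ hn'.le, div_pow, exp_add, exp_add, ← exp_one_pow]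
        field_simp
        rw [sq_sqrt hn'.le, pow_succ']
    _ ≤ exp (m + 1) * √(m + 1) := by gcongr

theorem stmt0 (f : ℂ → ℂ) (hf : Differentiable ℂ f) (C : ℝ) (hC : 0 < C)
    (hgrowth : ∀ r : ℝ, 0 < r → M1 f r ≤ C * Real.exp r / Real.sqrt r) :
    ∀ m : ℕ, ∃ K : ℝ, ∀ n : ℕ, 1 ≤ n → supD (iteratedDeriv n f) m ≤ K := by
  intro m
  refine ⟨C * exp (m + 1) * √(m + 1), fun n hn => ?_⟩
  refine Real.sSup_le ?_ (by positivity)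
  rintro _ ⟨z, hz, rfl⟩
  rw [mem_closedBall_zero_iff] at hz
  set R : ℝ := n + m
  have hn1 : (1 : ℝ) ≤ n := mod_cast hn
  have hnR : (n : ℝ) ≤ R - ‖z‖ := by linarith
  have hR : 0 < R := by positivity
  have hcoeff (k : ℕ) : ‖iteratedDeriv k f 0‖ ≤ k ! * (C * exp R / √R) / R ^ k :=
    (norm_iteratedDeriv_zero_le_M1 hR hf.differentiableOn k).trans (by gcongr; exact hgrowth R hR)
  calc ‖iteratedDeriv n f z‖
      ≤ n ! * (C * exp R / √R) * R / (R - ‖z‖) ^ (n + 1) :=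
        norm_iteratedDeriv_le_of_norm_iteratedDeriv_zero_le hf hR hcoeff n (by linarith)
    _ ≤ n ! * (C * exp R / √R) * R / n ^ (n + 1) := by gcongr
    _ = C * (n ! * exp R * √R / n ^ (n + 1)) := by
        field_simp
        rw [sq_sqrt hR.le]
    _ ≤ C * (exp (m + 1) * √(m + 1)) := by
        gcongr
        exact factorial_mul_exp_mul_sqrt_div_pow_le (Nat.one_le_iff_ne_zero.1 hn) m.cast_nonneg
    _ = C * exp (m + 1) * √(m + 1) := by ring
end

section
/- Let (ω_n)_{n≥1} be a sequence of nonnegative reals with ω_n → ∞. Then there exists an entire function f with |f^{(n)}(0)| ≤ ω_n for all n ≥ 1, and there exist sets A, B ⊆ ℕ both of upper density 1 such that: (i) for every m ∈ ℕ, sup_{|z|≤m}|f^{(n)}(z)| → 0 as n → ∞ along n ∈ A, and (ii) for every m ∈ ℕ, sup_{|z|≤m}|f^{(n)}(z)| → ∞ as n → ∞ along n ∈ B. -/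
open Filter Metric

open scoped Classical in
/-- The upper density of a set of natural numbers. -/
noncomputable def upperDensity (A : Set ℕ) : ℝ :=
  Filter.limsup (fun N : ℕ => (((Finset.Icc 1 N).filter (· ∈ A)).card : ℝ) / N) Filter.atTop

/-!
Take `f = ∑ₖ aₖ zᵏ / k!` with `aₖ = min ⌊ωₖ⌋ k` on the blocks `((2j)!, (2j+1)!]` and `aₖ = 0`
elsewhere. Then `f⁽ⁿ⁾ = ∑ᵢ aₙ₊ᵢ zⁱ / i!`, so `f⁽ⁿ⁾(0) = aₙ ≤ ωₙ`, and `aₙ → ∞` along the blocks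
bounds the sup of `|f⁽ⁿ⁾|` on every disc from below. For `n ∈ ((2j+1)!, (j+1)(2j+1)!]` the
coefficients `aₙ, …, a₂ₙ₋₁` vanish, so on `|z| ≤ m` one gets `|f⁽ⁿ⁾(z)| ≤ C (4m)ⁿ / n! → 0`.
Both families of intervals have the form `(u, (j+1)u]`, hence upper density one.
-/

open Nat Topology

noncomputable def egf (a : ℕ → ℂ) (z : ℂ) : ℂ :=
  ∑' i, a i * z ^ i / (i ! : ℂ)

lemma Real.hasSum_pow_div_factorial (x : ℝ) : HasSum (fun i : ℕ => x ^ i / i !) (Real.exp x) := by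
  rw [Real.exp_eq_exp_ℝ]
  exact NormedSpace.expSeries_div_hasSum_exp x

lemma hasDerivAt_pow_succ_div_factorial (n : ℕ) (z : ℂ) :
    HasDerivAt (fun w : ℂ => w ^ (n + 1) / ((n + 1)! : ℂ)) (z ^ n / (n ! : ℂ)) z := by
  refine ((hasDerivAt_pow (n + 1) z).div_const _).congr_deriv ?_
  rw [Nat.factorial_succ]
  push_cast
  field_simp

lemma pow_add_div_factorial_le {x : ℝ} (hx : 0 ≤ x) (d i : ℕ) :
    x ^ (i + d) / ((i + d)! : ℝ) ≤ x ^ d / (d ! : ℝ) * (x ^ i / (i ! : ℝ)) := by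
  have hfac : (d ! : ℝ) * i ! ≤ (i + d)! := by
    rw [add_comm]
    exact_mod_cast Nat.le_of_dvd (Nat.factorial_pos _)
      (Nat.factorial_mul_factorial_dvd_factorial_add d i)
  rw [div_mul_div_comm (x ^ d) (d ! : ℝ), pow_add, mul_comm (x ^ i)]
  gcongr

lemma supD_le {f : ℂ → ℂ} {m K : ℝ} (hK : 0 ≤ K) (h : ∀ z ∈ closedBall (0 : ℂ) m, ‖f z‖ ≤ K) :
    supD f m ≤ K :=
  Real.sSup_le (Set.forall_mem_image.2 h) hK

lemma norm_le_supD {f : ℂ → ℂ} (hf : Continuous f) {m : ℝ} {z : ℂ}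
    (hz : z ∈ closedBall (0 : ℂ) m) : ‖f z‖ ≤ supD f m :=
  le_csSup ((isCompact_closedBall 0 m).bddAbove_image hf.norm.continuousOn) ⟨z, hz, rfl⟩

section egf

variable {a : ℕ → ℂ} {C r : ℝ}

lemma nonneg_of_forall_norm_le_mul_pow (ha : ∀ i, ‖a i‖ ≤ C * r ^ i) : 0 ≤ C := by
  simpa using (norm_nonneg _).trans (ha 0)

lemma norm_egf_term_le (ha : ∀ i, ‖a i‖ ≤ C * r ^ i) (hr : 0 ≤ r) {z : ℂ} {m : ℝ}
    (hz : ‖z‖ ≤ m) (i : ℕ) : ‖a i * z ^ i / (i ! : ℂ)‖ ≤ C * (r * m) ^ i / i ! := by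
  have hC := nonneg_of_forall_norm_le_mul_pow ha
  rw [norm_div, norm_mul, norm_pow, Complex.norm_natCast, mul_pow, ← mul_assoc]
  gcongr
  exact ha i

lemma summable_egf_term (ha : ∀ i, ‖a i‖ ≤ C * r ^ i) (hr : 0 ≤ r) (z : ℂ) :
    Summable (fun i => a i * z ^ i / (i ! : ℂ)) :=
  .of_norm_bounded (((Real.hasSum_pow_div_factorial _).mul_left C).summable.congr
    fun _ => (mul_div_assoc ..).symm) (norm_egf_term_le ha hr le_rfl)

lemma norm_egf_le (ha : ∀ i, ‖a i‖ ≤ C * r ^ i) (hr : 0 ≤ r) {d : ℕ} (hd : ∀ i < d, a i = 0)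
    {z : ℂ} {m : ℝ} (hz : ‖z‖ ≤ m) :
    ‖egf a z‖ ≤ C * (r * m) ^ d / d ! * Real.exp (r * m) := by
  have hrm : 0 ≤ r * m := mul_nonneg hr ((norm_nonneg z).trans hz)
  rw [egf, ← (summable_egf_term ha hr z).sum_add_tsum_nat_add d,
    Finset.sum_eq_zero fun i hi => by simp [hd i (Finset.mem_range.1 hi)], zero_add]
  refine tsum_of_norm_bounded ((Real.hasSum_pow_div_factorial _).mul_left _) fun i => ?_
  calc _ ≤ C * (r * m) ^ (i + d) / (i + d)! := norm_egf_term_le ha hr hz _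
    _ ≤ C * ((r * m) ^ d / d ! * ((r * m) ^ i / i !)) := by
        rw [mul_div_assoc]
        have hC := nonneg_of_forall_norm_le_mul_pow ha
        gcongr
        exact pow_add_div_factorial_le hrm d i
    _ = _ := by ring

lemma norm_shift_le (ha : ∀ i, ‖a i‖ ≤ C * r ^ i) (n : ℕ) :
    ∀ i, ‖a (n + i)‖ ≤ C * r ^ n * r ^ i :=
  fun i => (ha _).trans_eq (by ring)

lemma egf_eq_add_tsum_succ (ha : ∀ i, ‖a i‖ ≤ C * r ^ i) (hr : 0 ≤ r) (z : ℂ) :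
    egf a z = a 0 + ∑' i, a (i + 1) * (z ^ (i + 1) / ((i + 1)! : ℂ)) := by
  simp_rw [egf, (summable_egf_term ha hr z).tsum_eq_zero_add, mul_div_assoc]
  simp

lemma hasDerivAt_egf (ha : ∀ i, ‖a i‖ ≤ C * r ^ i) (hr : 0 ≤ r) (z : ℂ) :
    HasDerivAt (egf a) (egf (fun i => a (i + 1)) z) z := by
  have hshift : ∀ i, ‖a (i + 1)‖ ≤ C * r * r ^ i := fun i => (ha _).trans_eq (by ring)
  set R := ‖z‖ + 1
  have hz : z ∈ ball (0 : ℂ) R := by simp [R]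
  have hbound : ∀ i, ∀ w ∈ ball (0 : ℂ) R,
      ‖a (i + 1) * (w ^ i / (i ! : ℂ))‖ ≤ C * r * (r * R) ^ i / i ! := by
    intro i w hw
    rw [← mul_div_assoc]
    exact norm_egf_term_le hshift hr (mem_ball_zero_iff.1 hw).le i
  have hsum : Summable fun i : ℕ => C * r * (r * R) ^ i / i ! :=
    ((Real.hasSum_pow_div_factorial _).mul_left (C * r)).summable.congr
      fun _ => (mul_div_assoc ..).symm
  have hsum_z : Summable fun i => a (i + 1) * (z ^ (i + 1) / ((i + 1)! : ℂ)) :=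
    (summable_egf_term ha hr z).comp_injective (add_left_injective 1) |>.congr
      fun _ => mul_div_assoc ..
  have hderiv := hasDerivAt_tsum_of_isPreconnected hsum isOpen_ball
    (convex_ball _ _).isPreconnected
    (fun i w _ => (hasDerivAt_pow_succ_div_factorial i w).const_mul (a (i + 1))) hbound
    hz hsum_z hz
  rw [funext (egf_eq_add_tsum_succ ha hr)]
  simpa only [egf, mul_div_assoc] using hderiv.const_add (a 0)

lemma iteratedDeriv_egf (ha : ∀ i, ‖a i‖ ≤ C * r ^ i) (hr : 0 ≤ r) (n : ℕ) :
    iteratedDeriv n (egf a) = egf (fun i => a (n + i)) := by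
  induction n with
  | zero => simp only [iteratedDeriv_zero, zero_add]
  | succ n ih =>
    ext z
    rw [iteratedDeriv_succ, ih, (hasDerivAt_egf (norm_shift_le ha n) hr z).deriv]
    simp only [add_assoc, add_comm 1]

lemma egf_zero : egf a 0 = a 0 := by
  rw [egf, tsum_eq_single 0 fun i hi => by simp [hi]]
  simp

lemma differentiable_egf (ha : ∀ i, ‖a i‖ ≤ C * r ^ i) (hr : 0 ≤ r) :
    Differentiable ℂ (egf a) :=
  fun z => (hasDerivAt_egf ha hr z).differentiableAt

lemma iteratedDeriv_egf_zero (ha : ∀ i, ‖a i‖ ≤ C * r ^ i) (hr : 0 ≤ r) (n : ℕ) :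
    iteratedDeriv n (egf a) 0 = a n := by
  rw [iteratedDeriv_egf ha hr, egf_zero, add_zero]

lemma norm_le_supD_iteratedDeriv_egf (ha : ∀ i, ‖a i‖ ≤ C * r ^ i) (hr : 0 ≤ r) {m : ℝ}
    (hm : 0 ≤ m) (n : ℕ) : ‖a n‖ ≤ supD (iteratedDeriv n (egf a)) m := by
  rw [← iteratedDeriv_egf_zero ha hr n]
  refine norm_le_supD ?_ (mem_closedBall_self hm)
  rw [iteratedDeriv_egf ha hr]
  exact (differentiable_egf (norm_shift_le ha n) hr).continuous

lemma tendsto_supD_iteratedDeriv_egf_zero (ha : ∀ i, ‖a i‖ ≤ C * r ^ i) (hr : 0 ≤ r) {m : ℝ}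
    (hm : 0 ≤ m) :
    Tendsto (fun n => supD (iteratedDeriv n (egf a)) m)
      (atTop ⊓ 𝓟 {n | ∀ i < n, a (n + i) = 0}) (𝓝 0) := by
  have hC := nonneg_of_forall_norm_le_mul_pow ha
  have hlim : Tendsto (fun n => C * Real.exp (r * m) * ((r * r * m) ^ n / n !)) atTop (𝓝 0) := by
    simpa using (FloorSemiring.tendsto_pow_div_factorial_atTop (r * r * m)).const_mul
      (C * Real.exp (r * m))
  refine squeeze_zero' (Eventually.of_forall fun n => ?_) ?_ (hlim.mono_left inf_le_left)
  · exact (norm_nonneg _).trans (norm_le_supD_iteratedDeriv_egf ha hr hm n)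
  refine eventually_inf_principal.2 (Eventually.of_forall fun n hn => ?_)
  rw [iteratedDeriv_egf ha hr]
  refine supD_le (by positivity) fun z hz =>
    (norm_egf_le (norm_shift_le ha n) hr hn (mem_closedBall_zero_iff.1 hz)).trans_eq ?_
  ring

lemma tendsto_supD_iteratedDeriv_egf_atTop (ha : ∀ i, ‖a i‖ ≤ C * r ^ i) (hr : 0 ≤ r) {m : ℝ}
    (hm : 0 ≤ m) {l : Filter ℕ} (hl : Tendsto (fun n => ‖a n‖) l atTop) :
    Tendsto (fun n => supD (iteratedDeriv n (egf a)) m) l atTop :=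
  tendsto_atTop_mono (norm_le_supD_iteratedDeriv_egf ha hr hm) hl

end egf

open scoped Classical in
lemma upperDensity_eq_one_of_Ioc_subset {S : Set ℕ} (u : ℕ → ℕ) (hu : ∀ j, 0 < u j)
    (hS : ∀ j, Set.Ioc (u j) ((j + 1) * u j) ⊆ S) : upperDensity S = 1 := by
  set ρ : ℕ → ℝ := fun N => (((Finset.Icc 1 N).filter (· ∈ S)).card : ℝ) / N
  have hρ1 : ∀ N, ρ N ≤ 1 := fun N => div_le_one_of_le₀ (by
    exact_mod_cast (Finset.card_filter_le _ _).trans (Nat.card_Icc 1 N).le) N.cast_nonneg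
  have hρ : ∀ j : ℕ, (j : ℝ) / (j + 1) ≤ ρ ((j + 1) * u j) := by
    intro j
    have hcard : j * u j ≤ ((Finset.Icc 1 ((j + 1) * u j)).filter (· ∈ S)).card := by
      calc j * u j = (Finset.Ioc (u j) ((j + 1) * u j)).card := by
            rw [Nat.card_Ioc, add_mul, one_mul, Nat.add_sub_cancel]
        _ ≤ _ := Finset.card_le_card fun n hn => by
            rw [Finset.mem_Ioc] at hn
            exact Finset.mem_filter.2 ⟨Finset.mem_Icc.2 ⟨by lia, hn.2⟩, hS j (Set.mem_Ioc.2 hn)⟩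
    have hu' : (0 : ℝ) < u j := by exact_mod_cast hu j
    calc (j : ℝ) / (j + 1) = (j * u j : ℕ) / ((j + 1) * u j : ℕ) := by
          push_cast; rw [mul_div_mul_right _ _ hu'.ne']
      _ ≤ ρ ((j + 1) * u j) := div_le_div_of_nonneg_right (by exact_mod_cast hcard) (by positivity)
  apply le_antisymm
  · exact limsup_le_of_le (isBoundedUnder_of ⟨0, fun N => by positivity⟩).isCoboundedUnder_le
      (Eventually.of_forall hρ1)
  have hv : Tendsto (fun j => (j + 1) * u j) atTop atTop :=
    tendsto_atTop_mono (fun j => Nat.le_mul_of_pos_right _ (hu j)) (tendsto_add_atTop_nat 1)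
  refine le_of_forall_lt_imp_le_of_dense fun b hb => le_limsup_of_frequently_le
    (hv.frequently (Eventually.frequently ?_)) (isBoundedUnder_of ⟨1, hρ1⟩)
  filter_upwards [(tendsto_order.1 (tendsto_natCast_div_add_atTop (1 : ℝ))).1 b hb] with j hj
  exact hj.le.trans (hρ j)

def factorialBlocks : Set ℕ := {k | ∃ j, (2 * j)! < k ∧ k ≤ (2 * j + 1)!}

lemma Ioc_subset_factorialBlocks (j : ℕ) :
    Set.Ioc (2 * j)! ((j + 1) * (2 * j)!) ⊆ factorialBlocks := by
  refine fun k hk => ⟨j, hk.1, hk.2.trans ?_⟩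
  rw [Nat.factorial_succ]
  gcongr
  lia

lemma add_notMem_factorialBlocks {j n i : ℕ}
    (hn : n ∈ Set.Ioc (2 * j + 1)! ((j + 1) * (2 * j + 1)!)) (hi : i < n) :
    n + i ∉ factorialBlocks := by
  obtain ⟨hn₁, hn₂⟩ := hn
  rintro ⟨j', hlow, hup⟩
  obtain hj' | hj' := lt_or_ge j' (j + 1)
  · have := Nat.factorial_le (show 2 * j' + 1 ≤ 2 * j + 1 by lia)
    lia
  · have h₁ := Nat.factorial_le (show 2 * j + 2 ≤ 2 * j' by lia)
    have h₂ : (2 * j + 2)! = 2 * ((j + 1) * (2 * j + 1)!) := by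
      rw [Nat.factorial_succ]; ring
    lia

noncomputable def blockCoeff (ω : ℕ → ℝ) : ℕ → ℕ :=
  factorialBlocks.indicator fun k => min ⌊ω k⌋₊ k

section blockCoeff

variable {ω : ℕ → ℝ}

lemma blockCoeff_le_self (k : ℕ) : blockCoeff ω k ≤ k := by
  unfold blockCoeff
  by_cases hk : k ∈ factorialBlocks
  · simp [Set.indicator_of_mem hk]
  · simp [Set.indicator_of_notMem hk]

lemma blockCoeff_le {k : ℕ} (hk : 0 ≤ ω k) : (blockCoeff ω k : ℝ) ≤ ω k := by
  unfold blockCoeff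
  by_cases hk' : k ∈ factorialBlocks
  · rw [Set.indicator_of_mem hk']
    exact (Nat.cast_le.2 (min_le_left _ _)).trans (Nat.floor_le hk)
  · simpa [Set.indicator_of_notMem hk'] using hk

lemma tendsto_blockCoeff (hω : Tendsto ω atTop atTop) :
    Tendsto (blockCoeff ω) (atTop ⊓ 𝓟 factorialBlocks) atTop := by
  refine (tendsto_congr' (eventually_inf_principal.2 (Eventually.of_forall fun k hk => ?_))).2
    (tendsto_inf_atTop _ ((tendsto_nat_floor_atTop.comp hω).mono_left inf_le_left)
      (tendsto_id.mono_left inf_le_left))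
  exact Set.indicator_of_mem hk _

end blockCoeff

theorem stmt6 (ω : ℕ → ℝ) (hω0 : ∀ n, 0 ≤ ω n) (hω : Tendsto ω atTop atTop) :
    ∃ f : ℂ → ℂ, Differentiable ℂ f ∧
      (∀ n : ℕ, 1 ≤ n → ‖iteratedDeriv n f 0‖ ≤ ω n) ∧
      ∃ A B : Set ℕ, upperDensity A = 1 ∧ upperDensity B = 1 ∧
        (∀ m : ℕ, Tendsto (fun n : ℕ => supD (iteratedDeriv n f) m)
          (atTop ⊓ 𝓟 A) (nhds 0)) ∧
        (∀ m : ℕ, Tendsto (fun n : ℕ => supD (iteratedDeriv n f) m)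
          (atTop ⊓ 𝓟 B) atTop) := by
  set a : ℕ → ℂ := fun k => (blockCoeff ω k : ℂ)
  have ha : ∀ i, ‖a i‖ ≤ 1 * 2 ^ i := fun i => by
    simpa [a] using (Nat.cast_le.2 ((blockCoeff_le_self i).trans Nat.lt_two_pow_self.le) :
      _ ≤ ((2 ^ i : ℕ) : ℝ))
  refine ⟨egf a, differentiable_egf ha zero_le_two, fun n _ => ?_, {n | ∀ i < n, a (n + i) = 0},
    factorialBlocks, ?_,
    upperDensity_eq_one_of_Ioc_subset _ (fun j => factorial_pos _) Ioc_subset_factorialBlocks,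
    fun m => tendsto_supD_iteratedDeriv_egf_zero ha zero_le_two m.cast_nonneg,
    fun m => tendsto_supD_iteratedDeriv_egf_atTop ha zero_le_two m.cast_nonneg ?_⟩
  · simpa [iteratedDeriv_egf_zero ha zero_le_two, a] using blockCoeff_le (hω0 n)
  · refine upperDensity_eq_one_of_Ioc_subset _ (fun j => factorial_pos (2 * j + 1))
      fun j n hn i hi => ?_
    simp [a, blockCoeff, Set.indicator_of_notMem (add_notMem_factorialBlocks hn hi)]
  · simpa [a, Function.comp_def] using tendsto_natCast_atTop_atTop.comp (tendsto_blockCoeff hω)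
end

section
/- There exist strictly increasing sequences of positive integers (α_n) and (β_n) satisfying α_n < 2α_n² < β_n < β_n² < α_{n+1} for all n, and ∑_{n=α_N}^∞ n^{1+n/2} · N^n / n! < 1/N for all N ∈ ℕ. -/
/-!
From `n^n / n! ≤ eⁿ` one gets, once `√n ≥ 16 R`,
`n^{1+n/2} Rⁿ / n! = n (√n R)ⁿ / n! ≤ n (n/16)ⁿ / n! ≤ 2ⁿ eⁿ / 16ⁿ ≤ 2⁻ⁿ`,
so the tail of the series from any `m ≥ 256 R²` is at most `2 · 2⁻ᵐ`. It therefore suffices to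
choose `α (N+1)` larger than both `β_N² = (2 α_N² + 1)²` and `256 (N+1)²`.
-/

open Real Nat

lemma Real.rpow_one_add_natCast_div_two {x : ℝ} (hx : 0 ≤ x) (n : ℕ) :
    x ^ (1 + (n : ℝ) / 2) = x * √x ^ n := by
  rw [rpow_add' hx (by positivity), rpow_one, sqrt_eq_rpow, ← rpow_mul_natCast hx]
  ring_nf

noncomputable def seriesTerm (R : ℝ) (n : ℕ) : ℝ :=
  (n : ℝ) ^ (1 + (n : ℝ) / 2) * R ^ n / (n ! : ℝ)

lemma seriesTerm_nonneg {R : ℝ} (hR : 0 ≤ R) (n : ℕ) : 0 ≤ seriesTerm R n := by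
  unfold seriesTerm; positivity

lemma seriesTerm_le_half_pow {R : ℝ} (hR : 0 ≤ R) {n : ℕ} (hn : 256 * R ^ 2 ≤ n) :
    seriesTerm R n ≤ (1 / 2) ^ n := by
  have hsqrt : 16 * R ≤ √n := (le_sqrt (by positivity) n.cast_nonneg).2 (by linarith)
  have hbase : √n * R ≤ n / 16 := by
    nlinarith [mul_self_sqrt n.cast_nonneg, sqrt_nonneg (n : ℝ)]
  have hn2 : (n : ℝ) ≤ 2 ^ n := by exact_mod_cast n.lt_two_pow_self.le
  have he : exp 1 ≤ 4 := by linarith [exp_one_lt_d9]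
  calc seriesTerm R n = n * (√n * R) ^ n / n ! := by
        rw [seriesTerm, rpow_one_add_natCast_div_two n.cast_nonneg, mul_pow]; ring
    _ ≤ n * (n / 16) ^ n / n ! := by gcongr
    _ = n * ((n : ℝ) ^ n / n !) / 16 ^ n := by rw [div_pow]; ring
    _ ≤ 2 ^ n * exp 1 ^ n / 16 ^ n := by
        rw [exp_one_pow]; gcongr; exact pow_div_factorial_le_exp _ n.cast_nonneg n
    _ = (exp 1 / 8) ^ n := by
        rw [div_pow, show (16 : ℝ) ^ n = 2 ^ n * 8 ^ n by rw [← mul_pow]; norm_num]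
        field_simp
    _ ≤ (1 / 2) ^ n := pow_le_pow_left₀ (by positivity) (by linarith) n

lemma tsum_seriesTerm_tail_le {R : ℝ} (hR : 0 ≤ R) {m : ℕ} (hm : 256 * R ^ 2 ≤ m) :
    ∑' k, seriesTerm R (k + m) ≤ 2 * (1 / 2) ^ m := by
  have hgeom : HasSum (fun k => ((1 : ℝ) / 2) ^ (k + m)) (2 * (1 / 2) ^ m) := by
    simpa only [pow_add] using hasSum_geometric_two.mul_right ((1 / 2 : ℝ) ^ m)
  have hle (k : ℕ) : seriesTerm R (k + m) ≤ (1 / 2) ^ (k + m) :=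
    seriesTerm_le_half_pow hR (hm.trans (by push_cast; linarith))
  rw [← hgeom.tsum_eq]
  exact (hgeom.summable.of_nonneg_of_le (fun k => seriesTerm_nonneg hR _) hle).tsum_le_tsum hle
    hgeom.summable

lemma two_mul_half_pow_lt_inv {N m : ℕ} (hN : 1 ≤ N) (hm : N < m) :
    2 * (1 / 2 : ℝ) ^ m < 1 / N := by
  have h2 : 2 * N < 2 ^ m :=
    calc 2 * N < 2 * 2 ^ N := by linarith [N.lt_two_pow_self]
      _ = 2 ^ (N + 1) := by ring
      _ ≤ 2 ^ m := Nat.pow_le_pow_right two_pos hm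
  have hN' : (0 : ℝ) < N := by exact_mod_cast hN
  rw [div_pow, one_pow, lt_div_iff₀ hN', mul_one_div, div_mul_eq_mul_div,
    div_lt_one (by positivity)]
  exact_mod_cast h2

def alpha : ℕ → ℕ
  | 0 => 1
  | n + 1 => (2 * alpha n ^ 2 + 1) ^ 2 + 256 * (n + 1) ^ 2 + 1

lemma alpha_pos (n : ℕ) : 0 < alpha n := by
  cases n <;> simp [alpha]

lemma alpha_succ_gt (n : ℕ) :
    (2 * alpha n ^ 2 + 1) ^ 2 < alpha (n + 1) ∧ 256 * (n + 1) ^ 2 < alpha (n + 1) := by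
  simp only [alpha]; omega

theorem stmt7 :
    ∃ α β : ℕ → ℕ,
      (∀ n : ℕ, 0 < α n) ∧
      (∀ n : ℕ, α n < 2 * (α n) ^ 2 ∧ 2 * (α n) ^ 2 < β n ∧ β n < (β n) ^ 2 ∧
        (β n) ^ 2 < α (n + 1)) ∧
      (∀ N : ℕ, 1 ≤ N →
        ∑' n : ℕ, ((n + α N : ℕ) : ℝ) ^ (1 + ((n + α N : ℕ) : ℝ) / 2) * (N : ℝ) ^ (n + α N)
            / ((n + α N).factorial : ℝ) < 1 / N) := by
  refine ⟨alpha, fun n => 2 * alpha n ^ 2 + 1, alpha_pos, fun n => ?_, fun N hN => ?_⟩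
  · have := alpha_pos n
    dsimp only
    exact ⟨by nlinarith, by omega, by nlinarith, (alpha_succ_gt n).1⟩
  · obtain ⟨n, rfl⟩ := Nat.exists_eq_add_of_le' hN
    have hlarge := (alpha_succ_gt n).2
    calc ∑' k, seriesTerm (n + 1 : ℕ) (k + alpha (n + 1))
        ≤ 2 * (1 / 2) ^ alpha (n + 1) :=
          tsum_seriesTerm_tail_le (by positivity) (by exact_mod_cast hlarge.le)
      _ < 1 / (n + 1 : ℕ) := two_mul_half_pow_lt_inv hN (by nlinarith)
end

section
/- Let X be a metrizable topological vector space, A ⊆ X, and B a dense vector subspace of X with A + B ⊆ A and A ∩ B = ∅. If A ∪ {0} contains a vector subspace of dimension equal to dim(X), then there is a dense vector subspace M of X with M ⊆ A ∪ {0} and dim(M) = dim(X). -/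
/-!
If `dim X` is finite, `M₀` is already all of `X`. Otherwise take a Hamel basis `(b_j)_{j ∈ J}`
of `B` and a linearly independent family in `M₀` indexed by `(J × ℕ) ⊕ ι` with `#ι = dim M₀`;
this is possible because `#J ≤ dim M₀` is infinite. Rescale the vectors `u_{j,n}` of the first
part so that `u_{j,n} → 0`, which first countability allows. The vectors `b_j + u_{j,n}` and `u_i`
span a subspace `M` whose closure contains every `b_j`, hence `B`, so `M` is dense. A nonzero
element of `M` is `b + m` with `b ∈ B` and `0 ≠ m ∈ M₀ ⊆ A ∪ {0}`, so it lies in `A + B ⊆ A`.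
Since `0 ∉ A`, the spanning family is also independent, and `dim M = dim M₀`.
-/

open Set Submodule Filter Topology Cardinal

universe u

section
variable {R X K : Type*} [Ring R] [AddCommGroup X] [Module R X] {A : Set X} {B : Submodule R X}
  {f u : K → X}

lemma linearCombination_add_mem_of_ne_zero (hAB : ∀ a ∈ A, ∀ b ∈ B, a + b ∈ A)
    (hf : ∀ k, f k ∈ B) (hu : LinearIndependent R u) (huA : (span R (range u) : Set X) ⊆ A ∪ {0})
    {l : K →₀ R} (hl : l ≠ 0) : Finsupp.linearCombination R (f + u) l ∈ A := by
  have hsplit : Finsupp.linearCombination R (f + u) l =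
      Finsupp.linearCombination R u l + Finsupp.linearCombination R f l := by
    simp [Finsupp.linearCombination_apply, smul_add, Finsupp.sum_add, add_comm]
  have hfB : Finsupp.linearCombination R f l ∈ B := by
    refine span_le.mpr (range_subset_iff.mpr hf) ?_
    rw [← Finsupp.range_linearCombination]
    exact LinearMap.mem_range_self _ l
  have huA : Finsupp.linearCombination R u l ∈ A := by
    refine (huA ?_).resolve_right fun h0 => hl (linearIndependent_iff.mp hu l h0)
    rw [SetLike.mem_coe, ← Finsupp.range_linearCombination]
    exact LinearMap.mem_range_self _ l
  rw [hsplit]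
  exact hAB _ huA _ hfB

lemma span_range_add_subset (hAB : ∀ a ∈ A, ∀ b ∈ B, a + b ∈ A)
    (hf : ∀ k, f k ∈ B) (hu : LinearIndependent R u) (huA : (span R (range u) : Set X) ⊆ A ∪ {0}) :
    (span R (range (f + u)) : Set X) ⊆ A ∪ {0} := by
  intro x hx
  rw [SetLike.mem_coe, ← Finsupp.range_linearCombination] at hx
  obtain ⟨l, rfl⟩ := hx
  rcases eq_or_ne l 0 with rfl | hl
  · simp
  · exact Or.inl (linearCombination_add_mem_of_ne_zero hAB hf hu huA hl)

lemma linearIndependent_add (hAB : ∀ a ∈ A, ∀ b ∈ B, a + b ∈ A) (h0A : (0 : X) ∉ A)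
    (hf : ∀ k, f k ∈ B) (hu : LinearIndependent R u) (huA : (span R (range u) : Set X) ⊆ A ∪ {0}) :
    LinearIndependent R (f + u) :=
  linearIndependent_iff.mpr fun l hl => by
    by_contra hne
    exact h0A (hl ▸ linearCombination_add_mem_of_ne_zero hAB hf hu huA hne)

end

lemma exists_units_smul_tendsto_zero {𝕜 X : Type*} [NontriviallyNormedField 𝕜] [AddCommMonoid X]
    [Module 𝕜 X] [TopologicalSpace X] [ContinuousSMul 𝕜 X] [FirstCountableTopology X]
    (x : ℕ → X) : ∃ c : ℕ → 𝕜ˣ, Tendsto (fun n => (c n : 𝕜) • x n) atTop (𝓝 0) := by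
  obtain ⟨s, hs⟩ := (𝓝 (0 : X)).exists_antitone_basis
  have hsmall : ∀ n, ∃ t : 𝕜, t ≠ 0 ∧ t • x n ∈ s n := by
    intro n
    have h : Tendsto (fun t : 𝕜 => t • x n) (𝓝[≠] 0) (𝓝 0) :=
      ((continuous_id.smul continuous_const).tendsto' 0 _ (zero_smul _ _)).mono_left
        nhdsWithin_le_nhds
    exact ((h.eventually (hs.mem n)).and self_mem_nhdsWithin).exists.imp fun t ht => ⟨ht.2, ht.1⟩
  choose t ht0 hts using hsmall
  exact ⟨fun n => Units.mk0 (t n) (ht0 n), hs.tendsto hts⟩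

lemma Submodule.dense_of_subset_closure {R M : Type*} [Semiring R] [TopologicalSpace M]
    [AddCommMonoid M] [Module R M] [ContinuousAdd M] [ContinuousConstSMul R M] {s : Set M}
    {N : Submodule R M} (hs : Dense (span R s : Set M)) (h : s ⊆ closure N) :
    Dense (N : Set M) :=
  dense_closure.mp (hs.mono (span_le.mpr h : span R s ≤ N.topologicalClosure))

lemma Module.Basis.span_range_coe {R M : Type*} [Semiring R] [AddCommMonoid M] [Module R M]
    {N : Submodule R M} {J : Type*} (b : Module.Basis J R N) :
    span R (range fun j => (b j : M)) = N := by
  conv_rhs => rw [← N.map_subtype_top, ← b.span_eq, map_span, ← range_comp]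
  rfl

lemma Cardinal.mk_prod_nat_sum_eq {J ι : Type u} (hJ : #J ≤ #ι) (hι : ℵ₀ ≤ #ι) :
    #((J × ℕ) ⊕ ι) = #ι := by
  simp only [mk_sum, mk_prod, mk_nat, lift_id, lift_aleph0, lift_uzero]
  exact add_eq_right hι ((mul_le_mul_left hJ _).trans (mul_aleph0_eq hι).le)

theorem exists_dense_submodule_subset_of_rank_le {𝕜 X : Type*} [NontriviallyNormedField 𝕜]
    [AddCommGroup X] [Module 𝕜 X] [TopologicalSpace X] [ContinuousAdd X] [ContinuousSMul 𝕜 X]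
    [FirstCountableTopology X] {A : Set X} {B M₀ : Submodule 𝕜 X} (hB : Dense (B : Set X))
    (hAB : ∀ a ∈ A, ∀ b ∈ B, a + b ∈ A) (h0A : (0 : X) ∉ A) (hM₀A : (M₀ : Set X) ⊆ A ∪ {0})
    (hrank : Module.rank 𝕜 B ≤ Module.rank 𝕜 M₀) (hinf : ℵ₀ ≤ Module.rank 𝕜 M₀) :
    ∃ M : Submodule 𝕜 X, Dense (M : Set X) ∧ (M : Set X) ⊆ A ∪ {0} ∧
      Module.rank 𝕜 M = Module.rank 𝕜 M₀ := by
  let J := Module.Free.ChooseBasisIndex 𝕜 B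
  let ι := Module.Free.ChooseBasisIndex 𝕜 M₀
  let bB : Module.Basis J 𝕜 B := Module.Free.chooseBasis 𝕜 B
  let bM : Module.Basis ι 𝕜 M₀ := Module.Free.chooseBasis 𝕜 M₀
  rw [Module.Free.rank_eq_card_chooseBasisIndex 𝕜 B,
    Module.Free.rank_eq_card_chooseBasisIndex 𝕜 M₀] at hrank
  rw [Module.Free.rank_eq_card_chooseBasisIndex 𝕜 M₀] at hinf ⊢
  have hK := mk_prod_nat_sum_eq hrank hinf
  obtain ⟨σ⟩ := Cardinal.eq.mp hK
  let e : (J × ℕ) ⊕ ι → X := fun k => (bM (σ k) : X)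
  have he : LinearIndependent 𝕜 e :=
    (bM.linearIndependent.map' M₀.subtype M₀.ker_subtype).comp σ σ.injective
  choose c hc using fun j => exists_units_smul_tendsto_zero (𝕜 := 𝕜) fun n => e (.inl (j, n))
  let f : (J × ℕ) ⊕ ι → X := Sum.elim (fun p => bB p.1) 0
  let w : (J × ℕ) ⊕ ι → 𝕜ˣ := Sum.elim (fun p => c p.1 p.2) 1
  let u := w • e
  have hf : ∀ k, f k ∈ B := by
    rintro (p | i)
    exacts [(bB p.1).2, B.zero_mem]
  have hu : LinearIndependent 𝕜 u := he.units_smul w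
  have huA : (span 𝕜 (range u) : Set X) ⊆ A ∪ {0} :=
    subset_trans (span_le.mpr (range_subset_iff.mpr fun k => M₀.smul_of_tower_mem _ (bM _).2))
      hM₀A
  refine ⟨span 𝕜 (range (f + u)), ?_, span_range_add_subset hAB hf hu huA, ?_⟩
  · refine dense_of_subset_closure (s := range fun j => (bB j : X)) (by rwa [bB.span_range_coe]) ?_
    rintro _ ⟨j, rfl⟩
    refine mem_closure_of_tendsto (by simpa using (hc j).const_add (bB j : X)) ?_
    exact Eventually.of_forall fun n => subset_span ⟨.inl (j, n), rfl⟩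
  · have hv := linearIndependent_add hAB h0A hf hu huA
    rw [rank_span hv, mk_range_eq _ hv.injective, hK]

lemma Submodule.eq_top_of_rank_eq_of_lt_aleph0 {K V : Type*} [DivisionRing K] [AddCommGroup V]
    [Module K V] {S : Submodule K V} (h : Module.rank K S = Module.rank K V)
    (hfin : Module.rank K S < ℵ₀) : S = ⊤ :=
  haveI : FiniteDimensional K V := Module.rank_lt_aleph0_iff.mp (h ▸ hfin)
  eq_top_of_finrank_eq (congrArg toNat h)

theorem stmt14 (X : Type*) [AddCommGroup X] [Module ℂ X] [TopologicalSpace X]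
    [IsTopologicalAddGroup X] [ContinuousSMul ℂ X] [TopologicalSpace.MetrizableSpace X]
    (A : Set X) (B : Submodule ℂ X) (hBdense : Dense (B : Set X))
    (hAB : ∀ a ∈ A, ∀ b ∈ B, a + b ∈ A)
    (hdisj : A ∩ (B : Set X) = ∅)
    (hbig : ∃ M₀ : Submodule ℂ X, (M₀ : Set X) ⊆ A ∪ {0} ∧
      Module.rank ℂ M₀ = Module.rank ℂ X) :
    ∃ M : Submodule ℂ X, Dense (M : Set X) ∧ (M : Set X) ⊆ A ∪ {0} ∧
      Module.rank ℂ M = Module.rank ℂ X := by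
  obtain ⟨M₀, hM₀A, hM₀rank⟩ := hbig
  rcases lt_or_ge (Module.rank ℂ M₀) ℵ₀ with hfin | hinf
  · refine ⟨M₀, ?_, hM₀A, hM₀rank⟩
    rw [eq_top_of_rank_eq_of_lt_aleph0 hM₀rank hfin, top_coe]
    exact dense_univ
  · have h0A : (0 : X) ∉ A := fun h => eq_empty_iff_forall_notMem.mp hdisj 0 ⟨h, B.zero_mem⟩
    obtain ⟨M, hM, hMA, hMrank⟩ := exists_dense_submodule_subset_of_rank_le hBdense hAB h0A
      hM₀A (hM₀rank ▸ B.rank_le) hinf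
    exact ⟨M, hM, hMA, hMrank.trans hM₀rank⟩
end

section
/- Let f be an entire function satisfying M_∞(f,r) ≤ C·e^r/√r for all r > 0, for some constant C > 0. Then f is not hypercyclic for the differentiation operator D on H(ℂ), i.e., the orbit {D^n f : n ∈ ℕ} is not dense in H(ℂ) with the compact-open topology. -/
open Metric
open Nat

/-- `M_∞(f,r)`: the sup of `‖f‖` on the circle of radius `r`. -/
noncomputable def Minf (f : ℂ → ℂ) (r : ℝ) : ℝ :=
  sSup ((fun z => ‖f z‖) '' Metric.sphere (0:ℂ) r)

/-- Cauchy's estimate for iterated derivatives of an entire function. -/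
lemma cauchy_estimate_aux (f : ℂ → ℂ) (hf : Differentiable ℂ f) (R : ℝ) (hR : 0 < R) (M : ℝ)
    (hM : ∀ z ∈ sphere (0:ℂ) R, ‖f z‖ ≤ M) (n : ℕ) :
    ‖iteratedDeriv n f 0‖ ≤ (n ! : ℝ) * M * R⁻¹ ^ n := by
  set p := cauchyPowerSeries f 0 R with hp
  have h : HasFPowerSeriesOnBall f p 0 ⊤ := by
    have := hf.hasFPowerSeriesOnBall (0:ℂ) (R := ⟨R, hR.le⟩) (by exact_mod_cast hR)
    exact this
  have h1 : (n ! : ℕ) • p n (fun _ => (1:ℂ)) = iteratedFDeriv ℂ n f 0 (fun _ => 1) :=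
    h.factorial_smul 1 n
  have h2 : iteratedDeriv n f 0 = iteratedFDeriv ℂ n f 0 (fun _ => 1) := by
    rw [iteratedDeriv_eq_iteratedFDeriv]
  have hMnn : 0 ≤ M :=
    le_trans (norm_nonneg _) (hM (circleMap 0 R 0) (circleMap_mem_sphere 0 hR.le 0))
  have hnorm : ‖p n (fun _ => (1:ℂ))‖ ≤ ‖p n‖ := by
    calc ‖p n (fun _ => (1:ℂ))‖ ≤ ‖p n‖ * ∏ _i : Fin n, ‖(1:ℂ)‖ := (p n).le_opNorm _
    _ = ‖p n‖ := by simp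
  have hint : ∫ θ : ℝ in (0)..2 * Real.pi, ‖f (circleMap 0 R θ)‖ ≤ 2 * Real.pi * M := by
    calc ∫ θ : ℝ in (0)..2 * Real.pi, ‖f (circleMap 0 R θ)‖
        ≤ ∫ _θ : ℝ in (0)..2 * Real.pi, M := by
          apply intervalIntegral.integral_mono_on Real.two_pi_pos.le
          · exact ((hf.continuous.norm.comp (continuous_circleMap 0 R))).intervalIntegrable _ _
          · exact intervalIntegrable_const
          · intro θ _; exact hM _ (circleMap_mem_sphere 0 hR.le θ)
    _ = 2 * Real.pi * M := by simp [mul_comm]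
  have hpn : ‖p n‖ ≤ M * R⁻¹ ^ n := by
    calc ‖p n‖
        ≤ ((2 * Real.pi)⁻¹ * ∫ θ : ℝ in (0)..2 * Real.pi, ‖f (circleMap 0 R θ)‖) * |R|⁻¹ ^ n :=
          norm_cauchyPowerSeries_le f 0 R n
    _ ≤ ((2 * Real.pi)⁻¹ * (2 * Real.pi * M)) * |R|⁻¹ ^ n := by gcongr
    _ = M * R⁻¹ ^ n := by
          rw [abs_of_pos hR, inv_mul_cancel_left₀ (by positivity)]
  calc ‖iteratedDeriv n f 0‖ = ‖(n ! : ℕ) • p n (fun _ => (1:ℂ))‖ := by rw [h1, h2]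
  _ = (n ! : ℝ) * ‖p n (fun _ => (1:ℂ))‖ := by simp [norm_smul]
  _ ≤ (n ! : ℝ) * (M * R⁻¹ ^ n) := by gcongr; exact hnorm.trans hpn
  _ = (n ! : ℝ) * M * R⁻¹ ^ n := by ring

/-- Stirling-type upper bound on the factorial. -/
lemma factorial_le_aux (n : ℕ) (hn : 1 ≤ n) :
    (n ! : ℝ) ≤ Real.exp 1 * Real.sqrt n * ((n : ℝ) / Real.exp 1) ^ n := by
  have hs : Stirling.stirlingSeq n ≤ Real.exp 1 / Real.sqrt 2 := by
    obtain ⟨m, rfl⟩ := Nat.exists_eq_add_of_le hn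
    calc Stirling.stirlingSeq (1 + m) = (Stirling.stirlingSeq ∘ Nat.succ) m := by
          simp [Function.comp, Nat.succ_eq_add_one, Nat.add_comm]
    _ ≤ (Stirling.stirlingSeq ∘ Nat.succ) 0 := Stirling.stirlingSeq'_antitone (Nat.zero_le m)
    _ = Real.exp 1 / Real.sqrt 2 := by simp [Function.comp]
  have hden : 0 < Real.sqrt (2 * n : ℝ) * ((n : ℝ) / Real.exp 1) ^ n := by
    have hn0 : (0:ℝ) < n := by exact_mod_cast hn
    positivity
  have := (div_le_iff₀ hden).mp hs
  calc (n ! : ℝ)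
      ≤ Real.exp 1 / Real.sqrt 2 * (Real.sqrt (2 * n : ℝ) * ((n : ℝ) / Real.exp 1) ^ n) := this
  _ = Real.exp 1 * Real.sqrt n * ((n : ℝ) / Real.exp 1) ^ n := by
      rw [show (2 * (n:ℝ)) = 2 * n by ring, Real.sqrt_mul (by norm_num) (n : ℝ)]
      field_simp

theorem stmt17 (f : ℂ → ℂ) (hf : Differentiable ℂ f) (C : ℝ) (hC : 0 < C)
    (hgrowth : ∀ r : ℝ, 0 < r → Minf f r ≤ C * Real.exp r / Real.sqrt r) :
    ¬ (∀ g : ℂ → ℂ, Differentiable ℂ g → ∀ ε : ℝ, 0 < ε → ∀ m : ℕ,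
        ∃ n : ℕ, supD (fun z => iteratedDeriv n f z - g z) m < ε) := by
  intro H
  set B : ℝ := C * Real.exp 1 with hB
  have hBpos : 0 < B := by positivity
  -- pointwise bound on spheres
  have hsphere : ∀ R : ℝ, 0 < R → ∀ z ∈ sphere (0:ℂ) R,
      ‖f z‖ ≤ C * Real.exp R / Real.sqrt R := by
    intro R hR z hz
    have hbdd : BddAbove ((fun z => ‖f z‖) '' sphere (0:ℂ) R) :=
      ((isCompact_sphere (0:ℂ) R).image hf.continuous.norm).bddAbove
    exact le_trans (le_csSup hbdd ⟨z, hz, rfl⟩) (hgrowth R hR)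
  -- uniform bound on all iterated derivatives at 0
  have hbound : ∀ n : ℕ, ‖iteratedDeriv n f 0‖ ≤ B := by
    intro n
    rcases Nat.eq_zero_or_pos n with rfl | hn
    · have h := cauchy_estimate_aux f hf 1 one_pos (C * Real.exp 1 / Real.sqrt 1)
        (hsphere 1 one_pos) 0
      simpa using h
    · have hn0 : (0:ℝ) < n := by exact_mod_cast hn
      have h := cauchy_estimate_aux f hf n hn0 (C * Real.exp n / Real.sqrt n)
        (hsphere n hn0) n
      refine h.trans ?_
      have hfac := factorial_le_aux n hn
      have hrest : 0 ≤ C * Real.exp (n:ℝ) / Real.sqrt n * ((n:ℝ)⁻¹) ^ n := by positivity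
      calc (n ! : ℝ) * (C * Real.exp n / Real.sqrt n) * ((n:ℝ)⁻¹) ^ n
          = (n ! : ℝ) * (C * Real.exp n / Real.sqrt n * ((n:ℝ)⁻¹) ^ n) := by ring
      _ ≤ (Real.exp 1 * Real.sqrt n * ((n : ℝ) / Real.exp 1) ^ n) *
            (C * Real.exp n / Real.sqrt n * ((n:ℝ)⁻¹) ^ n) := by gcongr
      _ = B := by
          rw [hB, ← Real.exp_one_pow, div_pow, inv_pow]
          have h1 : Real.sqrt (n:ℝ) ≠ 0 := by positivity
          have h2 : Real.exp 1 ^ n ≠ 0 := by positivity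
          have h3 : ((n:ℝ)) ^ n ≠ 0 := by positivity
          field_simp
  -- apply the density hypothesis with a constant too far away
  obtain ⟨n, hlt⟩ := H (fun _ => ((2 * B + 1 : ℝ) : ℂ)) (differentiable_const _) 1 one_pos 0
  have hsup : supD (fun z => iteratedDeriv n f z - ((2 * B + 1 : ℝ) : ℂ)) (0:ℕ)
      = ‖iteratedDeriv n f 0 - ((2 * B + 1 : ℝ) : ℂ)‖ := by
    rw [supD]
    norm_num [Metric.closedBall_zero, Set.image_singleton]
  have hge : (1:ℝ) ≤ ‖iteratedDeriv n f 0 - ((2 * B + 1 : ℝ) : ℂ)‖ := by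
    have htri : ‖((2 * B + 1 : ℝ) : ℂ)‖ - ‖iteratedDeriv n f 0‖
        ≤ ‖iteratedDeriv n f 0 - ((2 * B + 1 : ℝ) : ℂ)‖ := by
      rw [norm_sub_rev]
      exact norm_sub_norm_le _ _
    have hnc : ‖((2 * B + 1 : ℝ) : ℂ)‖ = 2 * B + 1 := by
      rw [Complex.norm_real, Real.norm_eq_abs, abs_of_pos (by linarith)]
    nlinarith [hbound n]
  rw [hsup] at hlt
  linarith
end
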